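/- arXiv:2211.00842 — 5 statements merged into one kernel-verified Lean document; each statement's English description precedes it below -/
import Mathlib

section
/- Let X be a pseudometric space, d ∈ X a depot, θ : ℝ → ℝ monotone with θ(0) ≥ 0, and let c₁, …, c_k ∈ X (k ≥ 1) be customer locations with nonnegative demands q₁, …, q_k. Then for every index ℓ ∈ {1, …, k}, the trip energy of the sequence obtained by deleting customer ℓ (and its demand q_ℓ) is at most the trip energy of the original sequence c₁, …, c_k. -/
/-- The energy of a delivery trip that starts at the depot `d` at location `prev`,
serves the listed customers in order (each list entry is a pair
(location, demand weight)), and returns empty to the depot.  Each leg costs the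
travel distance times `θ` evaluated at the total weight of the not-yet-delivered
parcels; the return leg is flown empty. -/
noncomputable def tripEnergyFrom {X : Type*} [PseudoMetricSpace X]
    (θ : ℝ → ℝ) (d : X) : X → List (X × ℝ) → ℝ
  | prev, [] => dist prev d * θ 0
  | prev, p :: rest =>
      dist prev p.1 * θ (p.2 + (rest.map Prod.snd).sum) + tripEnergyFrom θ d p.1 rest

private lemma sum_nonneg_aux {X : Type*} (L : List (X × ℝ)) (hq : ∀ p ∈ L, 0 ≤ p.2) :
    0 ≤ (L.map Prod.snd).sum := by
  induction L with
  | nil => simp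
  | cons p rest ih =>
      simp only [List.map_cons, List.sum_cons]
      have := hq p (by simp)
      have := ih (fun q hqmem => hq q (by simp [hqmem]))
      linarith

private lemma sum_eraseIdx_le_aux {X : Type*} (L : List (X × ℝ)) (hq : ∀ p ∈ L, 0 ≤ p.2)
    (ℓ : ℕ) : ((L.eraseIdx ℓ).map Prod.snd).sum ≤ (L.map Prod.snd).sum := by
  induction L generalizing ℓ with
  | nil => simp
  | cons p rest ih =>
      cases ℓ with
      | zero =>
          simp only [List.eraseIdx, List.map_cons, List.sum_cons]
          have := hq p (by simp)
          linarith
      | succ n =>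
          simp only [List.eraseIdx, List.map_cons, List.sum_cons]
          have := ih (fun q hqmem => hq q (by simp [hqmem])) n
          linarith

private lemma trip_erase_le {X : Type*} [PseudoMetricSpace X] (d : X)
    (θ : ℝ → ℝ) (hθ : Monotone θ) (hθ0 : 0 ≤ θ 0)
    (L : List (X × ℝ)) (hq : ∀ p ∈ L, 0 ≤ p.2) (prev : X) (ℓ : ℕ) :
    tripEnergyFrom θ d prev (L.eraseIdx ℓ) ≤ tripEnergyFrom θ d prev L := by
  have hθnn : ∀ x : ℝ, 0 ≤ x → 0 ≤ θ x := fun x hx => hθ0.trans (hθ hx)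
  induction L generalizing prev ℓ with
  | nil => simp [tripEnergyFrom, List.eraseIdx]
  | cons p rest ih =>
      have hp : 0 ≤ p.2 := hq p (by simp)
      have hrest : ∀ q ∈ rest, 0 ≤ q.2 := fun q hqmem => hq q (by simp [hqmem])
      have hS : 0 ≤ (rest.map Prod.snd).sum := sum_nonneg_aux rest hrest
      cases ℓ with
      | zero =>
          show tripEnergyFrom θ d prev rest ≤ _
          cases rest with
          | nil =>
              simp only [tripEnergyFrom, List.map_nil, List.sum_nil, add_zero]
              have htri : dist prev d ≤ dist prev p.1 + dist p.1 d := dist_triangle _ _ _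
              have hθle : θ 0 ≤ θ p.2 := hθ hp
              nlinarith [dist_nonneg (x := prev) (y := p.1),
                dist_nonneg (x := p.1) (y := d), dist_nonneg (x := prev) (y := d)]
          | cons q rest' =>
              simp only [tripEnergyFrom, List.map_cons, List.sum_cons]
              have hS' : 0 ≤ (rest'.map Prod.snd).sum :=
                sum_nonneg_aux rest' (fun r hr => hrest r (by simp [hr]))
              have hq2 : 0 ≤ q.2 := hrest q (by simp)
              have hθw : 0 ≤ θ (q.2 + (rest'.map Prod.snd).sum) := hθnn _ (by linarith)
              have hθle : θ (q.2 + (rest'.map Prod.snd).sum)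
                  ≤ θ (p.2 + (q.2 + (rest'.map Prod.snd).sum)) := hθ (by linarith)
              have htri : dist prev q.1 ≤ dist prev p.1 + dist p.1 q.1 :=
                dist_triangle _ _ _
              nlinarith [dist_nonneg (x := prev) (y := p.1),
                dist_nonneg (x := p.1) (y := q.1), dist_nonneg (x := prev) (y := q.1)]
      | succ n =>
          show dist prev p.1 * θ (p.2 + ((rest.eraseIdx n).map Prod.snd).sum)
              + tripEnergyFrom θ d p.1 (rest.eraseIdx n) ≤ _
          have h1 : θ (p.2 + ((rest.eraseIdx n).map Prod.snd).sum)
              ≤ θ (p.2 + (rest.map Prod.snd).sum) := by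
            have := sum_eraseIdx_le_aux rest hrest n
            exact hθ (by linarith)
          have h2 := ih hrest p.1 n
          have := dist_nonneg (x := prev) (y := p.1)
          simp only [tripEnergyFrom]
          nlinarith

/-- Deleting one customer from a trip cannot increase the trip energy, when travel
times come from a pseudometric and the energy model is `F(w, t) = t · θ(w)` with
`θ` monotone and `θ 0 ≥ 0`. -/
theorem stmt_1 {X : Type*} [PseudoMetricSpace X] (d : X)
    (θ : ℝ → ℝ) (hθ : Monotone θ) (hθ0 : 0 ≤ θ 0)
    (L : List (X × ℝ)) (hL : L ≠ []) (hq : ∀ p ∈ L, 0 ≤ p.2)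
    (ℓ : ℕ) (hℓ : ℓ < L.length) :
    tripEnergyFrom θ d d (L.eraseIdx ℓ) ≤ tripEnergyFrom θ d d L :=
  trip_erase_le d θ hθ hθ0 L hq d ℓ
end

section
/- Let X be a pseudometric space, d ∈ X a depot, θ : ℝ → ℝ monotone with θ(0) ≥ 0, and let L be a finite list of pairs (cᵢ, qᵢ) of customer locations cᵢ ∈ X and nonnegative demands qᵢ ≥ 0. Then for every sublist L′ of L (a subsequence, i.e., the customers of L′ appear in L in the same relative order), the trip energy of L′ is at most the trip energy of L. In particular, if serving the customers of L in this order is feasible with battery capacity M (trip energy of L ≤ M), then serving the customers of any sublist in the induced order is also feasible. -/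
/-!
Dropping a customer `a` from a trip replaces the two legs `prev → a → next` by the single leg
`prev → next`.  By the triangle inequality this leg is covered by the two old ones, each flown
with a load at least the new one (the load never increases by removing parcels), and `θ` is
monotone and nonnegative on nonnegative loads.  Induction along the sublist relation removes
the customers one at a time.
-/

lemma sum_map_snd_nonneg {α : Type*} {L : List (α × ℝ)} (hq : ∀ p ∈ L, 0 ≤ p.2) :
    0 ≤ (L.map Prod.snd).sum :=
  List.sum_nonneg (List.forall_mem_map.2 hq)

lemma List.Sublist.sum_map_snd_le {α : Type*} {L' L : List (α × ℝ)} (hsub : L'.Sublist L)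
    (hq : ∀ p ∈ L, 0 ≤ p.2) : (L'.map Prod.snd).sum ≤ (L.map Prod.snd).sum :=
  (hsub.map Prod.snd).sum_le_sum (List.forall_mem_map.2 hq)

section TripEnergy

variable {X : Type*} [PseudoMetricSpace X] {θ : ℝ → ℝ} {d : X}

lemma tripEnergyFrom_le_dist_mul_add (L : List (X × ℝ)) (prev a : X)
    (hθL : 0 ≤ θ (L.map Prod.snd).sum) :
    tripEnergyFrom θ d prev L
      ≤ dist prev a * θ (L.map Prod.snd).sum + tripEnergyFrom θ d a L := by
  cases L with
  | nil =>
    simp only [tripEnergyFrom, List.map_nil, List.sum_nil] at hθL ⊢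
    nlinarith [dist_triangle prev a d]
  | cons p rest =>
    simp only [tripEnergyFrom, List.map_cons, List.sum_cons] at hθL ⊢
    nlinarith [dist_triangle prev a p.1]

lemma tripEnergyFrom_le_of_sublist (hθ : Monotone θ) (hθ0 : 0 ≤ θ 0)
    {L' L : List (X × ℝ)} (hsub : L'.Sublist L) (hq : ∀ p ∈ L, 0 ≤ p.2) (prev : X) :
    tripEnergyFrom θ d prev L' ≤ tripEnergyFrom θ d prev L := by
  induction hsub generalizing prev with
  | slnil => exact le_rfl
  | @cons L' L a hsub ih =>
    have hqL : ∀ p ∈ L, 0 ≤ p.2 := fun p hp => hq p (List.mem_cons_of_mem a hp)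
    have hload : (L'.map Prod.snd).sum ≤ a.2 + (L.map Prod.snd).sum :=
      (hsub.sum_map_snd_le hqL).trans (le_add_of_nonneg_left (hq a List.mem_cons_self))
    have hθL' : 0 ≤ θ (L'.map Prod.snd).sum :=
      hθ0.trans (hθ (sum_map_snd_nonneg fun p hp => hqL p (hsub.subset hp)))
    calc tripEnergyFrom θ d prev L'
        ≤ dist prev a.1 * θ (L'.map Prod.snd).sum + tripEnergyFrom θ d a.1 L' :=
          tripEnergyFrom_le_dist_mul_add L' prev a.1 hθL'
      _ ≤ dist prev a.1 * θ (a.2 + (L.map Prod.snd).sum) + tripEnergyFrom θ d a.1 L :=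
          add_le_add (mul_le_mul_of_nonneg_left (hθ hload) dist_nonneg) (ih hqL a.1)
  | @cons_cons L' L a hsub ih =>
    have hqL : ∀ p ∈ L, 0 ≤ p.2 := fun p hp => hq p (List.mem_cons_of_mem a hp)
    have hload : a.2 + (L'.map Prod.snd).sum ≤ a.2 + (L.map Prod.snd).sum :=
      add_le_add_right (hsub.sum_map_snd_le hqL) a.2
    exact add_le_add (mul_le_mul_of_nonneg_left (hθ hload) dist_nonneg) (ih hqL a.1)

end TripEnergy

/-- Condition B of Appendix B: with metric travel times and the multiplicative
energy model `F(w, t) = t · θ(w)` (`θ` monotone, `θ 0 ≥ 0`), the trip energy of any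
sublist (subsequence) `L'` of `L` is at most the trip energy of `L`; in particular,
if serving `L` is feasible with battery capacity `M`, so is serving any sublist. -/
theorem stmt_2 {X : Type*} [PseudoMetricSpace X] (d : X)
    (θ : ℝ → ℝ) (hθ : Monotone θ) (hθ0 : 0 ≤ θ 0)
    (L L' : List (X × ℝ)) (hq : ∀ p ∈ L, 0 ≤ p.2) (hsub : L'.Sublist L) :
    tripEnergyFrom θ d d L' ≤ tripEnergyFrom θ d d L ∧
      ∀ M : ℝ, tripEnergyFrom θ d d L ≤ M → tripEnergyFrom θ d d L' ≤ M := by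
  have h : tripEnergyFrom θ d d L' ≤ tripEnergyFrom θ d d L :=
    tripEnergyFrom_le_of_sublist hθ hθ0 hsub hq d
  exact ⟨h, fun M hM => h.trans hM⟩
end

section
/- Let R be a finite set with |R| = n and let m be a natural number. Then the number of triples (r, L, p) with L ⊆ R, |L| ≤ m, r ∈ L, p ∈ L, and p ≠ r equals n · Σ_{i=0}^{m-1} i · C(n−1, i), where C denotes the binomial coefficient. -/
open Finset

lemma aux_count_stmt5 {α : Type*} [DecidableEq α] (R : Finset α) (m : ℕ) :
    ((R ×ˢ R.powerset ×ˢ R).filter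
        (fun t => t.2.1.card ≤ m ∧ t.1 ∈ t.2.1 ∧ t.2.2 ∈ t.2.1 ∧ t.2.2 ≠ t.1)).card =
      ∑ L ∈ R.powerset, if L.card ≤ m then L.card * (L.card - 1) else 0 := by
  rw [Finset.card_filter, Finset.sum_product]
  simp only [Finset.sum_product]
  rw [Finset.sum_comm]
  refine Finset.sum_congr rfl fun L hL => ?_
  rw [Finset.mem_powerset] at hL
  by_cases hc : L.card ≤ m
  · simp only [hc, true_and, if_true]
    calc ∑ r ∈ R, ∑ p ∈ R, (if r ∈ L ∧ p ∈ L ∧ p ≠ r then 1 else 0)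
        = ∑ r ∈ R, (if r ∈ L then L.card - 1 else 0) := by
          refine Finset.sum_congr rfl fun r hr => ?_
          by_cases hrL : r ∈ L
          · simp only [hrL, true_and, if_true]
            rw [← Finset.card_filter]
            have hfe : R.filter (fun p => p ∈ L ∧ p ≠ r) = L.erase r := by
              ext x
              simp only [Finset.mem_filter, Finset.mem_erase]
              constructor
              · rintro ⟨_, hx, hne⟩; exact ⟨hne, hx⟩
              · rintro ⟨hne, hx⟩; exact ⟨hL hx, hx, hne⟩
            rw [hfe, Finset.card_erase_of_mem hrL]
          · simp [hrL]
      _ = L.card * (L.card - 1) := by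
          rw [← Finset.sum_filter, Finset.filter_mem_eq_inter,
            Finset.inter_eq_right.mpr hL, Finset.sum_const, smul_eq_mul]
  · simp [hc]

lemma aux_arith_stmt5 (n m : ℕ) :
    ∑ k ∈ Finset.range (m + 1), k * (k - 1) * n.choose k
      = n * ∑ i ∈ Finset.range m, i * (n - 1).choose i := by
  rw [Finset.sum_range_succ', Finset.mul_sum]
  simp only [Nat.zero_mul, Nat.mul_zero, add_zero, Nat.add_sub_cancel]
  refine Finset.sum_congr rfl fun i _ => ?_
  cases n with
  | zero => simp
  | succ n' =>
    have h := Nat.add_one_mul_choose_eq n' i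
    simp only [Nat.succ_eq_add_one, Nat.add_sub_cancel]
    calc (i + 1) * i * (n' + 1).choose (i + 1)
        = i * ((n' + 1).choose (i + 1) * (i + 1)) := by ring
      _ = i * ((n' + 1) * n'.choose i) := by rw [← h]
      _ = (n' + 1) * (i * n'.choose i) := by ring

/-- The number of triples `(r, L, p)` with `L ⊆ R`, `|L| ≤ m`, `r ∈ L`, `p ∈ L`
and `p ≠ r` equals `n · Σ_{i=0}^{m-1} i · C(n-1, i)`, where `n = |R|`.  This
counting identity yields the middle term of the arc-count bound (30). -/
theorem stmt_5 {α : Type*} [DecidableEq α] (R : Finset α) (n m : ℕ) (hn : R.card = n) :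
    ((R ×ˢ R.powerset ×ˢ R).filter
        (fun t => t.2.1.card ≤ m ∧ t.1 ∈ t.2.1 ∧ t.2.2 ∈ t.2.1 ∧ t.2.2 ≠ t.1)).card =
      n * ∑ i ∈ Finset.range m, i * (n - 1).choose i := by
  subst hn
  rw [aux_count_stmt5, Finset.sum_powerset, ← aux_arith_stmt5 R.card m]
  have h1 : ∀ j ∈ Finset.range (R.card + 1),
      (∑ L ∈ Finset.powersetCard j R, if L.card ≤ m then L.card * (L.card - 1) else 0)
        = (if j ≤ m then j * (j - 1) else 0) * R.card.choose j := by
    intro j hj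
    rw [Finset.sum_congr rfl (fun L hL => by
      rw [(Finset.mem_powersetCard.mp hL).2]), Finset.sum_const,
      Finset.card_powersetCard, smul_eq_mul, mul_comm]
  rw [Finset.sum_congr rfl h1]
  set f : ℕ → ℕ := fun k => if k ≤ m then k * (k - 1) * R.card.choose k else 0 with hf
  have e1 : ∑ j ∈ Finset.range (R.card + 1), (if j ≤ m then j * (j - 1) else 0) * R.card.choose j
      = ∑ j ∈ Finset.range (R.card + 1), f j := by
    refine Finset.sum_congr rfl fun j _ => ?_
    by_cases h : j ≤ m <;> simp [hf, h]
  have e2 : ∑ k ∈ Finset.range (m + 1), k * (k - 1) * R.card.choose k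
      = ∑ k ∈ Finset.range (m + 1), f k := by
    refine Finset.sum_congr rfl fun k hk => ?_
    have hkm : k ≤ m := by rw [Finset.mem_range] at hk; omega
    simp [hf, hkm]
  have e3 : ∑ j ∈ Finset.range (R.card + 1), f j
      = ∑ j ∈ Finset.range (R.card + m + 1), f j := by
    refine Finset.sum_subset (Finset.range_subset_range.mpr (by omega)) fun k _ hk => ?_
    rw [Finset.mem_range, not_lt] at hk
    have : R.card.choose k = 0 := Nat.choose_eq_zero_of_lt (by omega)
    simp [hf, this]
  have e4 : ∑ k ∈ Finset.range (m + 1), f k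
      = ∑ k ∈ Finset.range (R.card + m + 1), f k := by
    refine Finset.sum_subset (Finset.range_subset_range.mpr (by omega)) fun k _ hk => ?_
    rw [Finset.mem_range, not_lt] at hk
    simp [hf, not_le.mpr (by omega : m < k)]
  rw [e1, e2, e3, e4]
end

section
/- Let R be a finite set with |R| = n, let m ≥ 1 be a natural number, and let 𝒱 be any set of pairs (r, L) with L ⊆ R, r ∈ L, and |L| ≤ m. Define the arc set A of the generated graph as the union of: (I) all pairs ((r, L), (p, K)) with (r, L) ∈ 𝒱, (p, K) ∈ 𝒱, |L| > 1, and K = L \ {r}; (II) all pairs ((r, L), e) with (r, L) ∈ 𝒱 and |L| = 1; and (III) all pairs (s, (r, L)) with (r, L) ∈ 𝒱, where s and e are the two depot symbols. Then |A| ≤ n · Σ_{i=0}^{m-1} C(n−1, i) + n · Σ_{i=0}^{m-1} i · C(n−1, i) + n. -/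
open Finset

/-! A delivery vertex `(r, L)` is determined by `r ∈ R` and the load `L \ {r}` that remains
after delivering `r`, a subset of `R \ {r}` of size `< m`; for a fixed `r` there are
`Σ_{i<m} C(n-1, i)` such loads. This bounds the rule-III arcs. A rule-I arc leaving `(r, L)` is
determined by the delivery `p ∈ L \ {r}` made next, so there are at most `|L \ {r}|` of them, and
summing over all loads gives `n · Σ_{i<m} i · C(n-1, i)`. A rule-II arc leaves `(r, {r})`, which
is determined by `r`, so there are at most `n` of them. -/

theorem sum_powerset_filter_card_lt {β M : Type*} [AddCommMonoid M] (s : Finset β) (m : ℕ)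
    (f : ℕ → M) :
    ∑ t ∈ s.powerset with #t < m, f #t = ∑ i ∈ range m, (#s).choose i • f i := by
  rw [← sum_fiberwise_of_maps_to (g := card) (t := range m)
    fun t ht => mem_range.2 (mem_filter.1 ht).2]
  refine sum_congr rfl fun i hi => ?_
  rw [← card_powersetCard, ← sum_const]
  have hfiber : {u ∈ {t ∈ s.powerset | #t < m} | #u = i} = powersetCard i s := by
    ext t
    simp only [mem_filter, mem_powerset, mem_powersetCard]
    constructor
    · rintro ⟨⟨hts, -⟩, rfl⟩
      exact ⟨hts, rfl⟩
    · rintro ⟨hts, rfl⟩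
      exact ⟨⟨hts, mem_range.1 hi⟩, rfl⟩
  exact sum_congr hfiber fun t ht => by rw [(mem_powersetCard.1 ht).2]

section Loads

variable {α : Type*} [DecidableEq α]

def remainingLoads (R : Finset α) (m : ℕ) (r : α) : Finset (Finset α) :=
  {t ∈ (R.erase r).powerset | #t < m}

theorem sum_remainingLoads {M : Type*} [AddCommMonoid M] {R : Finset α} {r : α} (hr : r ∈ R)
    (m : ℕ) (f : ℕ → M) :
    ∑ t ∈ remainingLoads R m r, f #t = ∑ i ∈ range m, (#R - 1).choose i • f i := by
  rw [remainingLoads, sum_powerset_filter_card_lt, card_erase_of_mem hr]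

theorem erase_mem_remainingLoads {R L : Finset α} {m : ℕ} {r : α} (hLR : L ⊆ R) (hr : r ∈ L)
    (hLm : #L ≤ m) : L.erase r ∈ remainingLoads R m r := by
  have hcard : #(L.erase r) + 1 = #L := card_erase_add_one hr
  simp only [remainingLoads, mem_filter, mem_powerset]
  exact ⟨erase_subset_erase r hLR, by omega⟩

theorem sum_le_sum_remainingLoads {M : Type*} [AddCommMonoid M] [PartialOrder M]
    [IsOrderedAddMonoid M] [CanonicallyOrderedAdd M] {R : Finset α} {m : ℕ}
    {V : Finset (α × Finset α)} (hV : ∀ v ∈ V, v.2 ⊆ R ∧ v.1 ∈ v.2 ∧ #v.2 ≤ m)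
    (g : α → Finset α → M) :
    ∑ v ∈ V, g v.1 (v.2.erase v.1) ≤ ∑ r ∈ R, ∑ t ∈ remainingLoads R m r, g r t := by
  rw [← sum_fiberwise_of_maps_to (g := Prod.fst) (t := R)
    fun v hv => (hV v hv).1 (hV v hv).2.1]
  refine sum_le_sum fun r _ => ?_
  have hinj :
      Set.InjOn (fun v : α × Finset α => v.2.erase r) ({v ∈ V | v.1 = r} : Finset _) := by
    intro v hv w hw hvw
    obtain ⟨hvV, rfl⟩ := mem_filter.1 hv
    obtain ⟨hwV, hwr⟩ := mem_filter.1 hw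
    refine Prod.ext hwr.symm (erase_injOn' v.1 (hV v hvV).2.1 ?_ hvw)
    exact hwr ▸ (hV w hwV).2.1
  calc ∑ v ∈ V with v.1 = r, g v.1 (v.2.erase v.1)
      = ∑ v ∈ V with v.1 = r, g r (v.2.erase r) :=
        sum_congr rfl fun v hv => by rw [(mem_filter.1 hv).2]
    _ = ∑ t ∈ {v ∈ V | v.1 = r}.image (·.2.erase r), g r t := (sum_image hinj).symm
    _ ≤ ∑ t ∈ remainingLoads R m r, g r t := by
        refine sum_le_sum_of_subset (image_subset_iff.2 fun v hv => ?_)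
        obtain ⟨hvV, rfl⟩ := mem_filter.1 hv
        exact erase_mem_remainingLoads (hV v hvV).1 (hV v hvV).2.1 (hV v hvV).2.2

theorem card_filter_eq_erase_le {V : Finset (α × Finset α)} (hV : ∀ v ∈ V, v.1 ∈ v.2) :
    #{p ∈ V ×ˢ V | p.2.2 = p.1.2.erase p.1.1} ≤ ∑ v ∈ V, #(v.2.erase v.1) := by
  rw [card_eq_sum_card_fiberwise (f := Prod.fst) (t := V)
    fun p hp => (mem_product.1 (mem_filter.1 hp).1).1]
  refine sum_le_sum fun v _ => card_le_card_of_injOn (·.2.1) ?_ ?_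
  · intro p hp
    simp only [mem_coe, mem_filter, mem_product] at hp
    obtain ⟨⟨⟨-, hwV⟩, hpL⟩, rfl⟩ := hp
    simpa [← hpL] using hV p.2 hwV
  · intro p hp q hq hpq
    simp only [mem_coe, mem_filter] at hp hq
    obtain ⟨⟨-, hpL⟩, rfl⟩ := hp
    obtain ⟨⟨-, hqL⟩, hqv⟩ := hq
    exact Prod.ext hqv.symm (Prod.ext hpq (by rw [hpL, hqL, hqv]))

end Loads

theorem card_filter_card_eq_one_le {α : Type*} {R : Finset α} {V : Finset (α × Finset α)}
    (hV : ∀ v ∈ V, v.2 ⊆ R ∧ v.1 ∈ v.2) : #{v ∈ V | #v.2 = 1} ≤ #R := by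
  have hsingleton : ∀ v ∈ V, #v.2 = 1 → v.2 = {v.1} := fun v hv h => by
    obtain ⟨a, ha⟩ := card_eq_one.1 h
    have hva := (hV v hv).2
    rw [ha, mem_singleton] at hva
    rw [ha, hva]
  refine card_le_card_of_injOn Prod.fst (fun v hv => ?_) fun v hv w hw hvw => ?_
  · exact (hV v (mem_filter.1 hv).1).1 (hV v (mem_filter.1 hv).1).2
  · obtain ⟨hvV, hv1⟩ := mem_filter.1 hv
    obtain ⟨hwV, hw1⟩ := mem_filter.1 hw
    exact Prod.ext hvw (by rw [hsingleton v hvV hv1, hsingleton w hwV hw1, hvw])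

theorem stmt_6_general {α : Type*} [DecidableEq α] (R : Finset α) (n m : ℕ) (hn : R.card = n)
    (V : Finset (α × Finset α))
    (hV : ∀ p ∈ V, p.2 ⊆ R ∧ p.1 ∈ p.2 ∧ p.2.card ≤ m) :
    (((V ×ˢ V).filter (fun p => 1 < p.1.2.card ∧ p.2.2 = p.1.2.erase p.1.1)).image
          (fun p => ((Sum.inl p.1 : (α × Finset α) ⊕ Bool), (Sum.inl p.2 : (α × Finset α) ⊕ Bool)))
        ∪ ((V.filter (fun v => v.2.card = 1)).image
          (fun v => ((Sum.inl v : (α × Finset α) ⊕ Bool), (Sum.inr false : (α × Finset α) ⊕ Bool))))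
        ∪ (V.image
          (fun v => ((Sum.inr true : (α × Finset α) ⊕ Bool), (Sum.inl v : (α × Finset α) ⊕ Bool))))).card
      ≤ n * ∑ i ∈ Finset.range m, (n - 1).choose i
        + n * ∑ i ∈ Finset.range m, i * (n - 1).choose i + n := by
  subst hn
  have hruleI : #{p ∈ V ×ˢ V | 1 < #p.1.2 ∧ p.2.2 = p.1.2.erase p.1.1}
      ≤ #R * ∑ i ∈ range m, i * (#R - 1).choose i := calc
    _ ≤ #{p ∈ V ×ˢ V | p.2.2 = p.1.2.erase p.1.1} :=
      card_le_card (monotone_filter_right _ fun _ _ h => h.2)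
    _ ≤ ∑ v ∈ V, #(v.2.erase v.1) := card_filter_eq_erase_le fun v hv => (hV v hv).2.1
    _ ≤ ∑ r ∈ R, ∑ t ∈ remainingLoads R m r, #t := sum_le_sum_remainingLoads hV fun _ t => #t
    _ = ∑ r ∈ R, ∑ i ∈ range m, (#R - 1).choose i • i :=
      sum_congr rfl fun r hr => sum_remainingLoads hr m fun i => i
    _ = _ := by simp only [sum_const, smul_eq_mul, mul_comm]
  have hruleII := card_filter_card_eq_one_le fun v hv => ⟨(hV v hv).1, (hV v hv).2.1⟩
  have hruleIII : #V ≤ #R * ∑ i ∈ range m, (#R - 1).choose i := calc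
    _ = ∑ v ∈ V, 1 := card_eq_sum_ones V
    _ ≤ ∑ r ∈ R, ∑ t ∈ remainingLoads R m r, 1 := sum_le_sum_remainingLoads hV fun _ _ => 1
    _ = ∑ r ∈ R, ∑ i ∈ range m, (#R - 1).choose i • 1 :=
      sum_congr rfl fun r hr => sum_remainingLoads hr m fun _ => 1
    _ = _ := by simp only [sum_const, smul_eq_mul, mul_one]
  calc _ ≤ _ := (card_union_le _ _).trans (add_le_add_left (card_union_le _ _) _)
    _ ≤ _ := add_le_add (add_le_add card_image_le card_image_le) card_image_le
    _ ≤ _ := by omega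

/-- Arc-count bound (30) of the paper.  Vertices of the generated graph are either
delivery vertices `Sum.inl (r, L)` (with `r ∈ L ⊆ R`, `|L| ≤ m`) or the depot
symbols `s = Sum.inr true` and `e = Sum.inr false`.  Arcs are generated by the
three rules:
I.  `((r, L), (p, K))` with both endpoints in `𝒱`, `|L| > 1` and `K = L \ {r}`;
II. `((r, L), e)` with `(r, L) ∈ 𝒱` and `|L| = 1`;
III. `(s, (r, L))` with `(r, L) ∈ 𝒱`.
Then `|A| ≤ n·Σ_{i<m} C(n-1,i) + n·Σ_{i<m} i·C(n-1,i) + n` where `n = |R|`. -/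
theorem stmt_6 {α : Type*} [DecidableEq α] (R : Finset α) (n m : ℕ) (hn : R.card = n)
    (hm : 1 ≤ m) (V : Finset (α × Finset α))
    (hV : ∀ p ∈ V, p.2 ⊆ R ∧ p.1 ∈ p.2 ∧ p.2.card ≤ m) :
    (((V ×ˢ V).filter (fun p => 1 < p.1.2.card ∧ p.2.2 = p.1.2.erase p.1.1)).image
          (fun p => ((Sum.inl p.1 : (α × Finset α) ⊕ Bool), (Sum.inl p.2 : (α × Finset α) ⊕ Bool)))
        ∪ ((V.filter (fun v => v.2.card = 1)).image
          (fun v => ((Sum.inl v : (α × Finset α) ⊕ Bool), (Sum.inr false : (α × Finset α) ⊕ Bool))))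
        ∪ (V.image
          (fun v => ((Sum.inr true : (α × Finset α) ⊕ Bool), (Sum.inl v : (α × Finset α) ⊕ Bool))))).card
      ≤ n * ∑ i ∈ Finset.range m, (n - 1).choose i
        + n * ∑ i ∈ Finset.range m, i * (n - 1).choose i + n :=
  stmt_6_general R n m hn V hV
end

section
/- Let X be a pseudometric space, d ∈ X a depot, c₁, …, c_k ∈ X customer locations with earliest service times a₁, …, a_k ∈ ℝ, and let the departure time from the depot be y₀ ∈ ℝ. Define service times recursively by y₁ = max(a₁, y₀ + dist(d, c₁)) and y_{i+1} = max(a_{i+1}, y_i + dist(c_i, c_{i+1})) for 1 ≤ i < k (the drone waits at a location if it arrives before the opening of the time window). For any index ℓ ∈ {1, …, k}, let y′ denote the service times computed by the same recursion for the shortened sequence c₁, …, c_{ℓ−1}, c_{ℓ+1}, …, c_k with the same departure time y₀. Then for every remaining customer, its service time under y′ is at most its service time under y; in particular, if y_i ≤ b_i for given deadlines b_i at every customer, then the shortened trip also meets the deadlines b_i of all remaining customers. -/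
/-- Service times along a trip: each customer is a triple
(location, opening time `a`, deadline `b`).  Starting from location `prev` at
time `t0`, the drone flies to the next customer and starts service at the later
of the arrival time and the opening of the time window (waiting if it arrives
early). -/
noncomputable def serviceTimes {X : Type*} [PseudoMetricSpace X] :
    X → ℝ → List (X × ℝ × ℝ) → List ℝ
  | _, _, [] => []
  | prev, t0, p :: rest =>
      max p.2.1 (t0 + dist prev p.1) ::
        serviceTimes p.1 (max p.2.1 (t0 + dist prev p.1)) rest

lemma serviceTimes_mono {X : Type*} [PseudoMetricSpace X] :
    ∀ (rest : List (X × ℝ × ℝ)) (prev' prev : X) (t' t : ℝ),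
      (∀ x : X, t' + dist prev' x ≤ t + dist prev x) →
      List.Forall₂ (· ≤ ·) (serviceTimes prev' t' rest) (serviceTimes prev t rest)
  | [], _, _, _, _, _ => List.Forall₂.nil
  | p :: rest, prev', prev, t', t, h => by
      have h1 : max p.2.1 (t' + dist prev' p.1) ≤ max p.2.1 (t + dist prev p.1) :=
        max_le_max le_rfl (h p.1)
      exact List.Forall₂.cons h1
        (serviceTimes_mono rest p.1 p.1 _ _ (fun x => by linarith [h1]))

lemma forall₂_eraseIdx {α β : Type*} {R : α → β → Prop} :
    ∀ {l₁ : List α} {l₂ : List β}, List.Forall₂ R l₁ l₂ →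
      ∀ i, List.Forall₂ R (l₁.eraseIdx i) (l₂.eraseIdx i)
  | _, _, List.Forall₂.nil, _ => by simp
  | _, _, List.Forall₂.cons _ hs, 0 => hs
  | _, _, List.Forall₂.cons h hs, (i+1) => List.Forall₂.cons h (forall₂_eraseIdx hs i)

lemma forall₂_trans {α β : Type*} [Preorder α] {S : α → β → Prop} :
    ∀ {l₁ l₂ : List α} {l₃ : List β}, List.Forall₂ (· ≤ ·) l₁ l₂ →
      List.Forall₂ S l₂ l₃ → (∀ a b c, a ≤ b → S b c → S a c) →
      List.Forall₂ S l₁ l₃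
  | _, _, _, List.Forall₂.nil, List.Forall₂.nil, _ => List.Forall₂.nil
  | _, _, _, List.Forall₂.cons h hs, List.Forall₂.cons h' hs', htr =>
      List.Forall₂.cons (htr _ _ _ h h') (forall₂_trans hs hs' htr)

lemma stmt_12_aux {X : Type*} [PseudoMetricSpace X] :
    ∀ (L : List (X × ℝ × ℝ)) (ℓ : ℕ) (d : X) (y₀ : ℝ),
      List.Forall₂ (· ≤ ·) (serviceTimes d y₀ (L.eraseIdx ℓ))
        ((serviceTimes d y₀ L).eraseIdx ℓ)
  | [], _, _, _ => by simp [serviceTimes]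
  | p :: rest, 0, d, y₀ => by
      simp only [List.eraseIdx, serviceTimes]
      apply serviceTimes_mono
      intro x
      have h1 : y₀ + dist d p.1 ≤ max p.2.1 (y₀ + dist d p.1) := le_max_right _ _
      have := dist_triangle d p.1 x
      linarith
  | p :: rest, (ℓ+1), d, y₀ => by
      simp only [List.eraseIdx, serviceTimes]
      exact List.Forall₂.cons le_rfl (stmt_12_aux rest ℓ p.1 _)

/-- Deleting one customer from a trip can only decrease (never increase) the
service times of the remaining customers when travel times come from a
pseudometric; in particular, if the original trip meets all deadlines then the
shortened trip also meets the deadlines of all remaining customers.  This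
underlies the correctness of pruning rule R2. -/
theorem stmt_12 {X : Type*} [PseudoMetricSpace X] (d : X) (y₀ : ℝ)
    (L : List (X × ℝ × ℝ)) (ℓ : ℕ) (hℓ : ℓ < L.length) :
    List.Forall₂ (· ≤ ·) (serviceTimes d y₀ (L.eraseIdx ℓ))
        ((serviceTimes d y₀ L).eraseIdx ℓ) ∧
      (List.Forall₂ (fun y p => y ≤ p.2.2) (serviceTimes d y₀ L) L →
        List.Forall₂ (fun y p => y ≤ p.2.2)
          (serviceTimes d y₀ (L.eraseIdx ℓ)) (L.eraseIdx ℓ)) := by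
  refine ⟨stmt_12_aux L ℓ d y₀, fun h => ?_⟩
  exact forall₂_trans (stmt_12_aux L ℓ d y₀) (forall₂_eraseIdx h ℓ)
    (fun a b c hab hbc => le_trans hab hbc)
end
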